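/- arXiv:2207.03255 — 3 statements merged into one kernel-verified Lean document; each statement's English description precedes it below -/
import Mathlib

section
/- Let (Q, ∘) be a RIPQ and for i ∈ Q let λ_i : Q → Q be the left middle translation, defined by λ_i(x) ∘ x = i for all x. Then λ_i is an automorphism of (Q, ∘): it is bijective and λ_i(x ∘ y) = λ_i(x) ∘ λ_i(y) for all x, y ∈ Q. -/
/-- In a RIPQ, each left middle translation `λ_i` is an
automorphism: it is bijective and preserves the operation. -/
theorem ripq_left_middle_translation_is_automorphism
    {Q : Type*} (op : Q → Q → Q)
    (idem : ∀ x, op x x = x)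
    (ldiv : ∀ a b, ∃! x, op a x = b)
    (rdiv : ∀ a b, ∃! y, op y a = b)
    (ldist : ∀ a x y, op a (op x y) = op (op a x) (op a y))
    (rdist : ∀ a x y, op (op x y) a = op (op x a) (op y a))
    (rip : ∀ x y, op (op y x) x = y)
    (lam : Q → Q → Q)
    (hlam : ∀ i x, op (lam i x) x = i) :
    ∀ i, Function.Bijective (lam i) ∧
      ∀ x y, lam i (op x y) = op (lam i x) (lam i y) := by
  have key : ∀ i x, lam i x = op i x := by
    intro i x
    have := rip x (lam i x)
    rw [hlam i x] at this
    exact this.symm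
  intro i
  constructor
  · constructor
    · intro a b hab
      rw [key, key] at hab
      obtain ⟨x, hx, hu⟩ := ldiv i (op i a)
      exact (hu a rfl).trans (hu b hab.symm).symm
    · intro b
      obtain ⟨x, hx, _⟩ := ldiv i b
      exact ⟨x, by rw [key]; exact hx⟩
  · intro x y
    rw [key, key, key, ldist]
end

section
/- Let (Q, ∘) be a LIPQ and for i ∈ Q let φ_i : Q → Q be the right middle translation, defined by x ∘ φ_i(x) = i for all x. Then φ_i is an automorphism of (Q, ∘): it is bijective and φ_i(x ∘ y) = φ_i(x) ∘ φ_i(y) for all x, y ∈ Q. -/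
/-- In a LIPQ, each right middle translation `φ_i` is an
automorphism: it is bijective and preserves the operation. -/
theorem lipq_right_middle_translation_is_automorphism
    {Q : Type*} (op : Q → Q → Q)
    (idem : ∀ x, op x x = x)
    (ldiv : ∀ a b, ∃! x, op a x = b)
    (rdiv : ∀ a b, ∃! y, op y a = b)
    (ldist : ∀ a x y, op a (op x y) = op (op a x) (op a y))
    (rdist : ∀ a x y, op (op x y) a = op (op x a) (op y a))
    (lip : ∀ x y, op x (op x y) = y)
    (phi : Q → Q → Q)
    (hphi : ∀ i x, op x (phi i x) = i) :
    ∀ i, Function.Bijective (phi i) ∧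
      ∀ x y, phi i (op x y) = op (phi i x) (phi i y) := by
  intro i
  have key : ∀ x, phi i x = op x i := by
    intro x
    obtain ⟨z, hz, huniq⟩ := ldiv x i
    exact (huniq _ (hphi i x)).trans (huniq _ (lip x i)).symm
  constructor
  · constructor
    · intro a b hab
      rw [key, key] at hab
      obtain ⟨y, hy, huniq⟩ := rdiv i (op a i)
      exact (huniq a rfl).trans (huniq b hab.symm).symm
    · intro b
      obtain ⟨y, hy, _⟩ := rdiv i b
      exact ⟨y, (key y).trans hy⟩
  · intro x y
    rw [key, key, key, rdist]
end

section
/- Let (Q, ·) be a finite LIPQ of order n, with middle translations λ_i and φ_i, and for i, j ∈ Q let the r-spin be φ_ij = φ_i ∘ λ_j and the l-spin be λ_ij = λ_i ∘ φ_j. Then: (1) if i ≠ j, then φ_ij(x) ≠ x and λ_ij(x) ≠ x for all x ∈ Q; (2) if i ≠ j, then φ_pi(x) ≠ φ_pj(x) and λ_pi(x) ≠ λ_pj(x) for all p, x ∈ Q; (3) for i ≠ j, φ_ij is the inverse permutation of φ_ji, and λ_ij is the inverse permutation of λ_ji. -/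
/-- In a finite LIPQ, with r-spins `φ_ij = φ_i ∘ λ_j` and
l-spins `λ_ij = λ_i ∘ φ_j`: (1) for `i ≠ j` the spins have no fixed points;
(2) for `i ≠ j`, `φ_pi(x) ≠ φ_pj(x)` and `λ_pi(x) ≠ λ_pj(x)`;
(3) for `i ≠ j`, `φ_ij` and `φ_ji` are mutually inverse permutations, and so
are `λ_ij` and `λ_ji`. -/
theorem lipq_spin_properties
    {Q : Type*} [Finite Q] (op : Q → Q → Q)
    (idem : ∀ x, op x x = x)
    (ldiv : ∀ a b, ∃! x, op a x = b)
    (rdiv : ∀ a b, ∃! y, op y a = b)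
    (ldist : ∀ a x y, op a (op x y) = op (op a x) (op a y))
    (rdist : ∀ a x y, op (op x y) a = op (op x a) (op y a))
    (lip : ∀ x y, op x (op x y) = y)
    (lam phi : Q → Q → Q)
    (hlam : ∀ i x, op (lam i x) x = i)
    (hphi : ∀ i x, op x (phi i x) = i) :
    (∀ i j, i ≠ j → ∀ x : Q,
        (phi i ∘ lam j) x ≠ x ∧ (lam i ∘ phi j) x ≠ x) ∧
    (∀ p i j, i ≠ j → ∀ x : Q,
        (phi p ∘ lam i) x ≠ (phi p ∘ lam j) x ∧
        (lam p ∘ phi i) x ≠ (lam p ∘ phi j) x) ∧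
    (∀ i j, i ≠ j →
        ((phi i ∘ lam j) ∘ (phi j ∘ lam i) = id ∧
         (phi j ∘ lam i) ∘ (phi i ∘ lam j) = id) ∧
        ((lam i ∘ phi j) ∘ (lam j ∘ phi i) = id ∧
         (lam j ∘ phi i) ∘ (lam i ∘ phi j) = id)) := by
  -- lam j (phi j y) = y
  have lam_phi : ∀ j y, lam j (phi j y) = y := by
    intro j y
    obtain ⟨w, hw, hu⟩ := rdiv (phi j y) j
    rw [hu _ (hlam j (phi j y)), hu _ (hphi j y)]
  -- phi j (lam j x) = x
  have phi_lam : ∀ j x, phi j (lam j x) = x := by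
    intro j x
    obtain ⟨w, hw, hu⟩ := ldiv (lam j x) j
    rw [hu _ (hphi j (lam j x)), hu _ (hlam j x)]
  refine ⟨?_, ?_, ?_⟩
  · intro i j hij x
    constructor
    · intro h
      apply hij
      have h1 := hphi i (lam j x)
      rw [Function.comp_apply] at h
      rw [h] at h1
      rw [← h1, hlam j x]
    · intro h
      apply hij
      have h1 := hlam i (phi j x)
      rw [Function.comp_apply] at h
      rw [h] at h1
      rw [← h1, hphi j x]
  · intro p i j hij x
    constructor
    · intro h
      apply hij
      simp only [Function.comp_apply] at h
      have := congrArg (lam p) h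
      rw [lam_phi, lam_phi] at this
      rw [← hlam i x, this, hlam j x]
    · intro h
      apply hij
      simp only [Function.comp_apply] at h
      have := congrArg (phi p) h
      rw [phi_lam, phi_lam] at this
      rw [← hphi i x, this, hphi j x]
  · intro i j _
    refine ⟨⟨?_, ?_⟩, ?_, ?_⟩ <;> funext x <;>
      simp only [Function.comp_apply, id_eq, lam_phi, phi_lam]
end
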